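/- If C is the free category on a quiver Q, then the length functor L : C → Bℕ sending a path to its length is CULF, and it is the unique CULF functor from C to Bℕ. -/

import Mathlib

/-! Preliminaries: the active-inert factorization system on the simplex
category, the inert subcategory `Δ_inert`, the one-object category `Bℕ`,
twisted arrow categories, and the explicit free decomposition space formula,
following Hackney–Kock, "Free decomposition spaces". -/

open CategoryTheory SimplexCategory

namespace FreeDecompPaper

/-- A map in the simplex category is *active* if it preserves endpoints:
`f 0 = 0` and `f (last) = last`. -/
def IsActive {x y : SimplexCategory} (f : x ⟶ y) : Prop :=
  f.toOrderHom 0 = 0 ∧ f.toOrderHom (Fin.last x.len) = Fin.last y.len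

/-- A map in the simplex category is *inert* (distance-preserving) if
`f (i+1) = f i + 1` for all `i`. -/
def IsInert {x y : SimplexCategory} (f : x ⟶ y) : Prop :=
  ∀ i : Fin x.len, (f.toOrderHom i.succ : ℕ) = (f.toOrderHom i.castSucc : ℕ) + 1

lemma isInert_id (x : SimplexCategory) : IsInert (𝟙 x) := by intro i; simp

lemma isInert_from_zero {n : ℕ} (f : mk 0 ⟶ mk n) : IsInert f := fun i => i.elim0

lemma isInert_comp {x y z : SimplexCategory} {f : x ⟶ y} {g : y ⟶ z}
    (hf : IsInert f) (hg : IsInert g) : IsInert (f ≫ g) := by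
  intro i
  have key : ∀ a b : Fin (y.len + 1), (b : ℕ) = (a : ℕ) + 1 →
      (g.toOrderHom b : ℕ) = (g.toOrderHom a : ℕ) + 1 := by
    intro a b hab
    have ha : (a : ℕ) < y.len := by have := b.isLt; omega
    have e1 : (⟨(a : ℕ), ha⟩ : Fin y.len).castSucc = a := by ext; simp
    have e2 : (⟨(a : ℕ), ha⟩ : Fin y.len).succ = b := by ext; simp; omega
    have := hg ⟨(a : ℕ), ha⟩
    rw [e1, e2] at this
    exact this
  simpa using key _ _ (hf i)

lemma isActive_id (x : SimplexCategory) : IsActive (𝟙 x) := by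
  constructor <;> simp

lemma isActive_comp {x y z : SimplexCategory} {f : x ⟶ y} {g : y ⟶ z}
    (hf : IsActive f) (hg : IsActive g) : IsActive (f ≫ g) := by
  constructor
  · show g.toOrderHom (f.toOrderHom 0) = 0
    rw [hf.1, hg.1]
  · show g.toOrderHom (f.toOrderHom (Fin.last x.len)) = Fin.last z.len
    rw [hf.2, hg.2]

/-- The inert map `ρᵢ : [1] → [k]` with image `{i, i+1}` (0-indexed vertices;
in the 1-indexed labelling of the paper its image is `{i-1, i}`). -/
def rho (k : ℕ) (i : Fin k) : mk 1 ⟶ mk k :=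
  mkHom ⟨fun j => ⟨(i : ℕ) + (j : ℕ), by have := i.isLt; have := j.isLt; omega⟩,
    fun a b h => by
      simp only [Fin.mk_le_mk]
      have : (a : ℕ) ≤ (b : ℕ) := h
      omega⟩

/-- The vertex map `[0] → [k]` picking out the vertex `j`. -/
def vtx (k : ℕ) (j : Fin (k + 1)) : mk 0 ⟶ mk k :=
  mkHom ⟨fun _ => j, fun _ _ _ => le_refl _⟩

/-- The unique active map `[1] → [k]`. -/
def mu (k : ℕ) : mk 1 ⟶ mk k :=
  mkHom ⟨fun j => ⟨(j : ℕ) * k, by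
      have hj : (j : ℕ) ≤ 1 := by have := j.isLt; omega
      have : (j : ℕ) * k ≤ 1 * k := Nat.mul_le_mul_right k hj
      omega⟩,
    fun a b h => by
      simp only [Fin.mk_le_mk]
      exact Nat.mul_le_mul_right k h⟩

lemma isActive_mu (k : ℕ) : IsActive (mu k) := by
  constructor
  · ext
    show ((0 : Fin 2) : ℕ) * k = ((0 : Fin (k+1)) : ℕ)
    simp
  · ext
    show ((Fin.last 1 : Fin 2) : ℕ) * k = ((Fin.last k : Fin (k+1)) : ℕ)
    simp [Fin.last]

/-- Iterated bottom coface `(d⊥)^a : [m] → [m+a]`, where `d⊥ = δ 0 : i ↦ i+1`. -/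
def dBotPow (m : ℕ) : (a : ℕ) → (mk m ⟶ mk (m + a))
  | 0 => 𝟙 _
  | a + 1 => dBotPow m a ≫ δ (0 : Fin (m + a + 2))

/-- Iterated top coface `(d⊤)^b : [m] → [m+b]`, where `d⊤ = δ (last) : i ↦ i`. -/
def dTopPow (m : ℕ) : (b : ℕ) → (mk m ⟶ mk (m + b))
  | 0 => 𝟙 _
  | b + 1 => dTopPow m b ≫ δ (Fin.last (m + b + 1))

lemma isInert_dBot (m : ℕ) : IsInert (δ (0 : Fin (m + 2)) : mk m ⟶ mk (m + 1)) := by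
  intro i
  show ((0 : Fin (m+2)).succAbove i.succ : ℕ) = ((0 : Fin (m+2)).succAbove i.castSucc : ℕ) + 1
  rw [Fin.succAbove_of_le_castSucc _ _ (by simp [Fin.le_def]),
    Fin.succAbove_of_le_castSucc _ _ (by simp [Fin.le_def])]
  simp

lemma isInert_dTop (m : ℕ) : IsInert (δ (Fin.last (m + 1)) : mk m ⟶ mk (m + 1)) := by
  intro i
  show ((Fin.last (m+1)).succAbove i.succ : ℕ) = ((Fin.last (m+1)).succAbove i.castSucc : ℕ) + 1
  have hi : (i : ℕ) < m := by have := i.isLt; simpa [SimplexCategory.len_mk] using this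
  rw [Fin.succAbove_of_castSucc_lt _ _ (by
      simp only [Fin.lt_def, Fin.coe_castSucc, Fin.val_succ, Fin.val_last]; omega),
    Fin.succAbove_of_castSucc_lt _ _ (by
      simp only [Fin.lt_def, Fin.coe_castSucc, Fin.val_last]; omega)]
  simp

lemma isInert_dBotPow (m a : ℕ) : IsInert (dBotPow m a) := by
  induction a with
  | zero => exact isInert_id _
  | succ a ih => exact isInert_comp ih (isInert_dBot _)

lemma isInert_dTopPow (m b : ℕ) : IsInert (dTopPow m b) := by
  induction b with
  | zero => exact isInert_id _
  | succ b ih => exact isInert_comp ih (isInert_dTop _)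

/-- The subcategory `Δ_inert` of the simplex category: objects are natural
numbers `n` (standing for the ordinal `[n]`), and morphisms `m ⟶ n` are the
inert maps `[m] → [n]`. -/
structure InertCat where
  n : ℕ

instance : Category InertCat where
  Hom x y := {f : mk x.n ⟶ mk y.n // IsInert f}
  id x := ⟨𝟙 _, isInert_id _⟩
  comp f g := ⟨f.1 ≫ g.1, isInert_comp f.2 g.2⟩
  id_comp f := by apply Subtype.ext; simp
  comp_id f := by apply Subtype.ext; simp
  assoc f g h := by apply Subtype.ext; simp

/-- The inclusion `j : Δ_inert → Δ`. -/
def jF : InertCat ⥤ SimplexCategory where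
  obj x := mk x.n
  map f := f.1
  map_id _ := rfl
  map_comp _ _ := rfl

/-- The top vertex `[0] → [m]` as a morphism of `Δ_inert`. -/
def topV (m : ℕ) : (⟨0⟩ : InertCat) ⟶ ⟨m⟩ :=
  ⟨vtx m (Fin.last m), isInert_from_zero _⟩

/-- The bottom vertex `[0] → [m]` as a morphism of `Δ_inert`. -/
def botV (m : ℕ) : (⟨0⟩ : InertCat) ⟶ ⟨m⟩ :=
  ⟨vtx m 0, isInert_from_zero _⟩

/-- The outer coface `d⊥ : [0] → [1]` (omitting `0`) as a morphism of `Δ_inert`. -/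
def dBotI : (⟨0⟩ : InertCat) ⟶ ⟨1⟩ := ⟨δ (0 : Fin 2), isInert_from_zero _⟩

/-- The outer coface `d⊤ : [0] → [1]` (omitting the top) as a morphism of `Δ_inert`. -/
def dTopI : (⟨0⟩ : InertCat) ⟶ ⟨1⟩ := ⟨δ (1 : Fin 2), isInert_from_zero _⟩

/-- The category with objects `ℕ` and morphisms `m ⟶ n` the pairs `(a,b)`
with `a + m + b = n`, composed by componentwise addition. -/
structure NPairCat where
  n : ℕ

instance : Category NPairCat where
  Hom x y := {p : ℕ × ℕ // p.1 + x.n + p.2 = y.n}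
  id x := ⟨(0, 0), by omega⟩
  comp f g := ⟨(f.1.1 + g.1.1, f.1.2 + g.1.2), by have h1 := f.2; have h2 := g.2; omega⟩
  id_comp f := by apply Subtype.ext; obtain ⟨⟨a, b⟩, h⟩ := f; simp
  comp_id f := by apply Subtype.ext; obtain ⟨⟨a, b⟩, h⟩ := f; simp
  assoc f g h := by apply Subtype.ext; simp; omega

/-- The one-object category `Bℕ` with endomorphism monoid `(ℕ,+)`. -/
abbrev BN := SingleObj (Multiplicative ℕ)

/-- The twisted arrow category of a category `C`: objects are arrows of `C`,
and a morphism from `f'` to `f` is a pair `(a, b)` with `f = a ≫ f' ≫ b`,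
i.e. `f = b ∘ f' ∘ a`. -/
def Tw (C : Type u) [Category.{v} C] := Σ (x : C) (y : C), x ⟶ y

instance (C : Type u) [Category.{v} C] : Category (Tw C) where
  Hom f g := {p : (g.1 ⟶ f.1) × (f.2.1 ⟶ g.2.1) // g.2.2 = p.1 ≫ f.2.2 ≫ p.2}
  id f := ⟨(𝟙 _, 𝟙 _), by simp⟩
  comp u v := ⟨(v.1.1 ≫ u.1.1, u.1.2 ≫ v.1.2), by
    have hu := u.2
    have hv := v.2
    simp only []
    simp only [hv, hu, Category.assoc]⟩
  id_comp u := by apply Subtype.ext; simp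
  comp_id u := by apply Subtype.ext; simp
  assoc u v w := by apply Subtype.ext; simp

/-- Extract the pair of natural numbers underlying a morphism in `Tw Bℕ`. -/
def twBNPair {f g : Tw BN} (u : f ⟶ g) : ℕ × ℕ :=
  (Multiplicative.toAdd (show Multiplicative ℕ from u.1.1),
   Multiplicative.toAdd (show Multiplicative ℕ from u.1.2))

/-- Extract the natural number underlying an object of `Tw Bℕ`. -/
def twBNObj (f : Tw BN) : ℕ :=
  Multiplicative.toAdd (show Multiplicative ℕ from f.2.2)

/-- The type of `k`-simplices of the free simplicial set on `A : Δ_inert^op → Set`: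
the explicit formula `X_k = ∑_{α : [k] ↠ [n] active} A_n`. -/
def FD (A : InertCat ᵒᵖ ⥤ Type) (k : ℕ) : Type :=
  Σ n : ℕ, {α : mk k ⟶ mk n // IsActive α} × A.obj (Opposite.op ⟨n⟩)

/-- The action of an active map `g : [k'] → [k]` on the free simplicial set,
given by precomposition on the indexing active maps and the identity on summands. -/
def FDmap (A : InertCat ᵒᵖ ⥤ Type) {k' k : ℕ} (g : mk k' ⟶ mk k) (hg : IsActive g) :
    FD A k → FD A k' :=
  fun x => ⟨x.1, ⟨g ≫ x.2.1.1, isActive_comp hg x.2.1.2⟩, x.2.2⟩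

/-- The map of free simplicial sets induced by a natural transformation. -/
def FDmapNat {A' A : InertCat ᵒᵖ ⥤ Type} (η : A' ⟶ A) (k : ℕ) : FD A' k → FD A k :=
  fun x => ⟨x.1, x.2.1, η.app _ x.2.2⟩

/-- The tuple of successive differences of a map `α : [k] → [n]`. -/
def diff {k n : ℕ} (α : mk k ⟶ mk n) : Fin k → ℕ :=
  fun i => (α.toOrderHom i.succ : ℕ) - (α.toOrderHom i.castSucc : ℕ)

/-- The set `Act(k)` of active maps out of `[k]` (with arbitrary codomain). -/
def ActFrom (k : ℕ) : Type :=
  Σ n : ℕ, {α : mk k ⟶ mk n // IsActive α}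

/-- The difference map `Act(k) → ℕ^k`. -/
def diffMap (k : ℕ) : ActFrom k → (Fin k → ℕ) := fun x => diff x.2.1

/-- The action of `φ : [k'] → [k]` on the `k`-simplices `ℕ^k` of the nerve of
`Bℕ`: the `i`-th entry of the result is the sum of the entries from `φ(i-1)`
to `φ(i) - 1`. -/
def nerveBNAct {k' k : ℕ} (φ : mk k' ⟶ mk k) (x : Fin k → ℕ) : Fin k' → ℕ :=
  fun i => ∑ j ∈ Finset.Ico ((φ.toOrderHom i.castSucc : ℕ)) ((φ.toOrderHom i.succ : ℕ)),
    (fun t => if h : t < k then x ⟨t, h⟩ else 0) j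

/-- The inert map `γᵢ : [nᵢ] → [n]`, `j ↦ α(i) + j` (where `nᵢ = α(i+1) - α(i)`),
appearing in the active-inert factorization of `α ∘ ρᵢ`. -/
def segIncl {k n : ℕ} (α : mk k ⟶ mk n) (i : Fin k) : mk (diff α i) ⟶ mk n :=
  mkHom ⟨fun j => ⟨(α.toOrderHom i.castSucc : ℕ) + (j : ℕ), by
      have hj : (j : ℕ) ≤ diff α i := by have := j.isLt; simp [len_mk] at this; omega
      have hle : (α.toOrderHom i.castSucc : ℕ) ≤ (α.toOrderHom i.succ : ℕ) :=
        α.toOrderHom.monotone (Fin.castSucc_le_succ i)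
      have := (α.toOrderHom i.succ).isLt
      simp only [diff] at hj
      simp [len_mk] at *
      omega⟩,
    fun a b h => by
      simp only [Fin.mk_le_mk]
      have : (a : ℕ) ≤ (b : ℕ) := h
      omega⟩

lemma isInert_segIncl {k n : ℕ} (α : mk k ⟶ mk n) (i : Fin k) :
    IsInert (segIncl α i) := by
  intro t
  show ((α.toOrderHom i.castSucc : ℕ) + (t.succ : ℕ)) =
    ((α.toOrderHom i.castSucc : ℕ) + (t.castSucc : ℕ)) + 1
  simp
  omega

/-- `γᵢ` as a morphism of `Δ_inert`. -/
def segInclI {k n : ℕ} (α : mk k ⟶ mk n) (i : Fin k) : (⟨diff α i⟩ : InertCat) ⟶ ⟨n⟩ :=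
  ⟨segIncl α i, isInert_segIncl α i⟩

/-- The Segal map of the free simplicial set `X = j_!(A)`: it sends the
`α`-summand `A_n` of `X_k` to the tuple of its restrictions along the `γᵢ`. -/
def fdSegalMap (A : InertCat ᵒᵖ ⥤ Type) (k : ℕ) : FD A k → (Fin k → FD A 1) :=
  fun x i => ⟨diff x.2.1.1 i, ⟨mu (diff x.2.1.1 i), isActive_mu _⟩,
    A.map (segInclI x.2.1.1 i).op x.2.2⟩

/-- Matching (fiber product over `X_0`) condition for a tuple in `(X_1)^k`:
consecutive components agree in `A_0` under top/bottom vertex restrictions. -/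
def fdMatching (A : InertCat ᵒᵖ ⥤ Type) (k : ℕ) (t : Fin k → FD A 1) : Prop :=
  ∀ (i : Fin k) (h : (i : ℕ) + 1 < k),
    A.map (topV (t i).1).op ((t i).2.2) =
      A.map (botV (t ⟨(i : ℕ) + 1, h⟩).1).op ((t ⟨(i : ℕ) + 1, h⟩).2.2)

/-- The restriction map `A_n → ∏ᵢ A_{nᵢ}` along the covering family `{γᵢ}`
associated to an active map `α : [k] → [n]`. -/
def resMap (A : InertCat ᵒᵖ ⥤ Type) {k n : ℕ} (α : mk k ⟶ mk n) :
    A.obj (Opposite.op ⟨n⟩) → ∀ i : Fin k, A.obj (Opposite.op ⟨diff α i⟩) :=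
  fun a i => A.map (segInclI α i).op a

/-- Matching (fiber product over `A_0`) condition for a tuple in `∏ᵢ A_{nᵢ}`. -/
def resMatching (A : InertCat ᵒᵖ ⥤ Type) {k n : ℕ} (α : mk k ⟶ mk n)
    (t : ∀ i : Fin k, A.obj (Opposite.op ⟨diff α i⟩)) : Prop :=
  ∀ (i : Fin k) (h : (i : ℕ) + 1 < k),
    A.map (topV (diff α i)).op (t i) =
      A.map (botV (diff α ⟨(i : ℕ) + 1, h⟩)).op (t ⟨(i : ℕ) + 1, h⟩)

/-- The length functor from the path category of a quiver to `Bℕ`. -/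
def lengthFunctor (Q : Type u) [Quiver.{u + 1} Q] : Paths Q ⥤ BN where
  obj _ := SingleObj.star _
  map p := Multiplicative.ofAdd p.length
  map_id _ := rfl
  map_comp {x y z} p q := by
    show Multiplicative.ofAdd (p.comp q).length = _
    show _ = (Multiplicative.ofAdd q.length) * (Multiplicative.ofAdd p.length)
    erw [Quiver.Path.length_comp, ← ofAdd_add]
    exact congrArg Multiplicative.ofAdd (Nat.add_comm _ _)

/-- A functor to `Bℕ` is CULF if every factorization in `(ℕ,+)` of the image of
a morphism `f` lifts uniquely to a factorization of `f`. -/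
def IsCULF {C : Type u} [Category.{v} C] (F : C ⥤ BN) : Prop :=
  ∀ {x y : C} (f : x ⟶ y) (a b : Multiplicative ℕ), F.map f = a * b →
    ∃! p : Σ z : C, (x ⟶ z) × (z ⟶ y),
      p.2.1 ≫ p.2.2 = f ∧ F.map p.2.1 = a ∧ F.map p.2.2 = b

/-- The category `𝕃` of finite linear orders `{1,…,n}` and convex monotone
injections. -/
structure LinOrdCat where
  n : ℕ

/-- A convex monotone injection between finite linear orders. -/
def IsConvexEmb {m n : ℕ} (f : Fin m → Fin n) : Prop :=
  StrictMono f ∧ ∀ (a b : Fin m) (c : Fin n), f a ≤ c → c ≤ f b → ∃ x, f x = c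

instance : Category LinOrdCat where
  Hom x y := {f : Fin x.n → Fin y.n // IsConvexEmb f}
  id x := ⟨id, strictMono_id, fun _ _ c _ _ => ⟨c, rfl⟩⟩
  comp f g := ⟨g.1 ∘ f.1, (g.2.1).comp f.2.1, by
    intro a b c h1 h2
    obtain ⟨w, hw⟩ := g.2.2 (f.1 a) (f.1 b) c h1 h2
    have ha : f.1 a ≤ w := by
      rw [← (g.2.1).le_iff_le]; rw [hw]; exact h1
    have hb : w ≤ f.1 b := by
      rw [← (g.2.1).le_iff_le]; rw [hw]; exact h2
    obtain ⟨v, hv⟩ := f.2.2 a b w ha hb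
    exact ⟨v, by simp [Function.comp, hv, hw]⟩⟩
  id_comp f := by apply Subtype.ext; rfl
  comp_id f := by apply Subtype.ext; rfl
  assoc f g h := by apply Subtype.ext; rfl

end FreeDecompPaper

namespace Quiver.Path

variable {V : Type*} [Quiver V] {a : V}

theorem exists_comp_eq_of_length_eq_add {c : V} (f : Path a c) {m n : ℕ}
    (h : f.length = m + n) :
    ∃ (b : V) (p : Path a b) (q : Path b c), p.comp q = f ∧ q.length = n := by
  induction f generalizing n with
  | nil => exact ⟨a, nil, nil, rfl, by rw [length_nil] at h ⊢; omega⟩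
  | @cons c' c f e ih =>
    cases n with
    | zero => exact ⟨c, f.cons e, nil, rfl, rfl⟩
    | succ n =>
      obtain ⟨b, p, q, hpq, hq⟩ := ih (n := n) (by simp at h; omega)
      exact ⟨b, p, q.cons e, by rw [comp_cons, hpq], by simp [hq]⟩

theorem sigma_eq_of_comp_eq_comp {b₁ b₂ c : V} {p₁ : Path a b₁} {q₁ : Path b₁ c}
    {p₂ : Path a b₂} {q₂ : Path b₂ c} (h : p₁.comp q₁ = p₂.comp q₂)
    (hq : q₁.length = q₂.length) :
    (⟨b₁, p₁, q₁⟩ : Σ b, Path a b × Path b c) = ⟨b₂, p₂, q₂⟩ := by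
  induction q₁ with
  | nil =>
    cases q₂ with
    | nil => cases h; rfl
    | cons => simp at hq
  | cons q₁ e₁ ih =>
    cases q₂ with
    | nil => simp at hq
    | cons q₂ e₂ =>
      simp only [comp_cons, cons.injEq] at h
      obtain ⟨rfl, hcomp, he⟩ := h
      cases he
      cases ih (eq_of_heq hcomp) (by simpa using hq)
      rfl

theorem existsUnique_comp_eq_of_length_eq_add {c : V} (f : Path a c) {m n : ℕ}
    (h : f.length = m + n) :
    ∃! t : Σ b, Path a b × Path b c,
      t.2.1.comp t.2.2 = f ∧ t.2.1.length = m ∧ t.2.2.length = n := by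
  obtain ⟨b, p, q, rfl, hq⟩ := exists_comp_eq_of_length_eq_add f h
  refine ⟨⟨b, p, q⟩, ⟨rfl, by simpa [hq] using h, hq⟩, ?_⟩
  rintro ⟨b', p', q'⟩ ⟨hcomp, -, hq'⟩
  exact sigma_eq_of_comp_eq_comp hcomp (hq'.trans hq.symm)

end Quiver.Path

namespace FreeDecompPaper

theorem IsCULF.sigma_eq_of_map_eq_id {C : Type u} [Category.{v} C] {F : C ⥤ BN}
    (hF : IsCULF F) {x y : C} {f : x ⟶ y} (hf : F.map f = 𝟙 _) :
    (⟨x, 𝟙 x, f⟩ : Σ z, (x ⟶ z) × (z ⟶ y)) = ⟨y, f, 𝟙 y⟩ :=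
  (hF f 1 1 (by rw [hf]; rfl)).unique
    ⟨Category.id_comp f, F.map_id x, hf⟩ ⟨Category.comp_id f, hf, F.map_id y⟩

section Paths

variable {Q : Type u} [Quiver.{u + 1} Q]

theorem lengthFunctor_map_eq_iff {x y : Paths Q} (f : x ⟶ y) (a : Multiplicative ℕ) :
    (lengthFunctor Q).map f = a ↔ Quiver.Path.length (V := Q) f = a.toAdd :=
  Multiplicative.ofAdd.eq_symm_apply.symm

theorem isCULF_lengthFunctor : IsCULF (lengthFunctor Q) := by
  intro x y f a b hab
  simp only [lengthFunctor_map_eq_iff]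
  exact Quiver.Path.existsUnique_comp_eq_of_length_eq_add f
    ((lengthFunctor_map_eq_iff f _).1 hab)

theorem map_eq_id_of_length_eq_zero (F : Paths Q ⥤ BN) {x y : Paths Q} (f : x ⟶ y)
    (hf : Quiver.Path.length (V := Q) f = 0) : F.map f = 𝟙 _ := by
  obtain rfl := Quiver.Path.eq_of_length_zero f hf
  obtain rfl := Quiver.Path.eq_nil_of_length_zero f hf
  exact F.map_id x

theorem IsCULF.map_toPath {F : Paths Q ⥤ BN} (hF : IsCULF F) {x y : Q} (e : x ⟶ y) :
    F.map e.toPath = Multiplicative.ofAdd 1 := by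
  obtain ⟨n, hn⟩ : ∃ n, F.map e.toPath = Multiplicative.ofAdd n := ⟨_, (ofAdd_toAdd _).symm⟩
  -- `F e = 0` would make the factorizations `𝟙 ≫ e` and `e ≫ 𝟙` coincide, while `F e = n + 2`
  -- would lift `1 + (n + 1)` to a factorization of an edge into two nontrivial paths.
  rcases n with _ | _ | n
  · have := congrArg (fun t => Quiver.Path.length (V := Q) t.2.1)
      (hF.sigma_eq_of_map_eq_id hn)
    exact absurd this zero_ne_one
  · exact hn
  · obtain ⟨⟨z, p, q⟩, ⟨hpq, hp, hq⟩, -⟩ := hF e.toPath (Multiplicative.ofAdd 1)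
      (Multiplicative.ofAdd (n + 1)) (by rw [hn, ← ofAdd_add, add_comm])
    have hlen : Quiver.Path.length (V := Q) p + Quiver.Path.length (V := Q) q = 1 :=
      (Quiver.Path.length_comp p q).symm.trans (congrArg _ hpq)
    rcases Nat.add_eq_one_iff.1 hlen with ⟨hp0, -⟩ | ⟨-, hq0⟩
    · rw [map_eq_id_of_length_eq_zero F p hp0] at hp
      exact (one_ne_zero (ofAdd_eq_one.1 hp.symm)).elim
    · rw [map_eq_id_of_length_eq_zero F q hq0] at hq
      exact (n.succ_ne_zero (ofAdd_eq_one.1 hq.symm)).elim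

end Paths

/-- For the free category on a quiver `Q`, the length functor
to `Bℕ` is CULF, and it is the unique CULF functor to `Bℕ`. -/
theorem lengthFunctor_culf_unique (Q : Type u) [Quiver.{u + 1} Q] :
    IsCULF (lengthFunctor Q) ∧
      ∀ F : Paths Q ⥤ BN, IsCULF F → F = lengthFunctor Q :=
  ⟨isCULF_lengthFunctor, fun F hF => Paths.ext_functor (Subsingleton.elim _ _)
    fun x y e => by
      simp only [eqToHom_refl, Category.comp_id, Category.id_comp]
      exact hF.map_toPath e⟩

end FreeDecompPaper
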